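/- Let K ⊂ ℝ^d be compact, let U be a compact subset of C(K), and let ϕ : ℝ → ℝ be a Lipschitz continuous function with sup_{t ∈ ℝ} |ϕ(t)| ≤ 1. Let p be a probability measure on ℝ^d that is (ϕ, K)-rich. Then for every ε > 0 and every δ ∈ (0,1) there exists N ∈ ℕ such that there is a measurable set E ⊆ (ℝ^d)^N with p^{⊗N}(E) ≥ 1 − δ, and for every (α_1, …, α_N) ∈ E there exist continuous maps c_1, …, c_N : U → ℝ such that for every f ∈ U, sup_{x ∈ K} | f(x) − ∑_{j=1}^N c_j(f) · ϕ( α_j · x ) | < ε. -/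

import Mathlib

/-!
Richness turns every element `t` of a finite `ε/3`-net of `U` into an integral
`∫ B(α) ϕ(α · x) dp(α)` with a bounded coefficient `B`, which may be truncated to vanish for large
`‖α‖`. For i.i.d. samples `α_j ∼ p`, Chebyshev's inequality and a union bound make the empirical
averages `(1/N) ∑ B(α_j) ϕ(α_j · x)` close to these integrals, with high probability, at the
finitely many points of a net of `K`. Since `B` vanishes for large `‖α‖`, both the averages and the
integrals are Lipschitz in `x` with a constant independent of the sample, which carries the
estimate over to all of `K`. Gluing the net elements with a partition of unity on `U` produces
coefficients depending continuously on `f`.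
-/

open scoped BigOperators RealInnerProductSpace
open MeasureTheory

def IsRich {q : ℕ} (ϕ : ℝ → ℝ) (V : Set (EuclideanSpace ℝ (Fin q)))
    (p : Measure (EuclideanSpace ℝ (Fin q))) : Prop :=
  ∃ g : EuclideanSpace ℝ (Fin q) → ℝ,
    Continuous g ∧ (∃ Cg : ℝ, ∀ x, |g x| ≤ Cg) ∧
    (∀ f : EuclideanSpace ℝ (Fin q) → ℝ, ContinuousOn f V → ∀ ε : ℝ, 0 < ε →
      ∃ (N : ℕ) (w a : Fin N → ℝ) (b : Fin N → EuclideanSpace ℝ (Fin q)),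
        ∀ x ∈ V, |f x - ∑ i, w i * g (a i • x + b i)| < ε) ∧
    (∀ (a : ℝ) (b : EuclideanSpace ℝ (Fin q)),
      ∃ β : EuclideanSpace ℝ (Fin q) → ℝ,
        Measurable β ∧ (∃ Cβ : ℝ, ∀ α, |β α| ≤ Cβ) ∧
        ∀ x ∈ V, g (a • x + b) = ∫ α, β α * ϕ ⟪α, x⟫ ∂p)

open scoped NNReal ENNReal
open ProbabilityTheory

section WeakLaw

variable {Ω : Type*} [MeasurableSpace Ω] {p : Measure Ω} [IsProbabilityMeasure p]

lemma measure_pi_le_abs_sum_sub_le {Y : Ω → ℝ} (hY : Measurable Y) {C : ℝ}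
    (hC : ∀ ω, |Y ω| ≤ C) (N : ℕ) {t : ℝ} (ht : 0 < t) :
    Measure.pi (fun _ : Fin N => p) {xs | t ≤ |∑ j, Y (xs j) - N * ∫ ω, Y ω ∂p|} ≤
      ENNReal.ofReal (N * C ^ 2 / t ^ 2) := by
  have hYL2 : MemLp Y 2 p := .of_bound hY.aestronglyMeasurable C (ae_of_all _ hC)
  set S : (Fin N → Ω) → ℝ := ∑ j, fun xs => Y (xs j)
  have hS : ∀ xs, S xs = ∑ j, Y (xs j) := fun xs => Finset.sum_apply _ _ _
  have hSL2 : MemLp S 2 (Measure.pi fun _ => p) :=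
    memLp_finsetSum' _ fun j _ => hYL2.comp_measurePreserving (measurePreserving_eval _ j)
  have hmean : (Measure.pi fun _ : Fin N => p)[S] = N * ∫ ω, Y ω ∂p := by
    simp_rw [hS]
    rw [integral_finsetSum _ fun j _ => integrable_comp_eval (hYL2.integrable one_le_two)]
    simp [integral_comp_eval (μ := fun _ : Fin N => p) hY.aestronglyMeasurable]
  have hvar : Var[S; Measure.pi fun _ : Fin N => p] ≤ N * C ^ 2 := by
    rw [variance_sum_pi fun _ => hYL2]
    have hvarY : Var[Y; p] ≤ C ^ 2 := by
      have := variance_le_sq_of_bounded (a := -C) (b := C)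
        (ae_of_all p fun ω => abs_le.mp (hC ω)) hY.aemeasurable
      convert this using 1
      ring
    calc ∑ _j : Fin N, Var[Y; p] ≤ ∑ _j : Fin N, C ^ 2 := Finset.sum_le_sum fun _ _ => hvarY
      _ = N * C ^ 2 := by simp
  calc _ = Measure.pi (fun _ : Fin N => p)
        {xs | t ≤ |S xs - (Measure.pi fun _ : Fin N => p)[S]|} := by simp_rw [hmean, hS]
    _ ≤ ENNReal.ofReal (Var[S; Measure.pi fun _ : Fin N => p] / t ^ 2) :=
        meas_ge_le_variance_div_sq hSL2 ht
    _ ≤ _ := ENNReal.ofReal_le_ofReal (by gcongr)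

lemma ofReal_one_sub_le_of_measure_compl_le {s : Set Ω}
    (hs : MeasurableSet s) {δ : ℝ} (hδ : 0 ≤ δ) (h : p sᶜ ≤ ENNReal.ofReal δ) :
    ENNReal.ofReal (1 - δ) ≤ p s := by
  have hs' := prob_compl_eq_one_sub (μ := p) hs.compl
  rw [compl_compl] at hs'
  rw [ENNReal.ofReal_sub _ hδ, ENNReal.ofReal_one, hs']
  exact tsub_le_tsub_left h 1

lemma exists_measure_pi_ge_forall_abs_average_sub_integral_lt {κ : Type*} [Fintype κ]
    {Y : κ → Ω → ℝ} (hY : ∀ k, Measurable (Y k)) {C : ℝ} (hC : ∀ k ω, |Y k ω| ≤ C)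
    {η δ : ℝ} (hη : 0 < η) (hδ : 0 < δ) :
    ∃ N : ℕ, ∃ E : Set (Fin N → Ω), MeasurableSet E ∧
      ENNReal.ofReal (1 - δ) ≤ Measure.pi (fun _ : Fin N => p) E ∧
      ∀ xs ∈ E, ∀ k, |(∑ j, Y k (xs j)) / N - ∫ ω, Y k ω ∂p| < η := by
  obtain ⟨N, hN⟩ := exists_nat_gt (Fintype.card κ * C ^ 2 / (η ^ 2 * δ))
  have hNpos : (0 : ℝ) < N := lt_of_le_of_lt (by positivity) hN
  set good : κ → Set (Fin N → Ω) :=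
    fun k => {xs | |(∑ j, Y k (xs j)) / N - ∫ ω, Y k ω ∂p| < η}
  have hgood : ∀ k, MeasurableSet (good k) := fun k =>
    measurableSet_lt (by fun_prop) measurable_const
  have hbad : ∀ k, Measure.pi (fun _ : Fin N => p) (good k)ᶜ ≤
      ENNReal.ofReal (C ^ 2 / (N * η ^ 2)) := by
    intro k
    have hset : (good k)ᶜ = {xs | N * η ≤ |∑ j, Y k (xs j) - N * ∫ ω, Y k ω ∂p|} := by
      ext xs
      simp only [good, Set.mem_compl_iff, Set.mem_ofPred_eq, not_lt]
      rw [div_sub' hNpos.ne', abs_div, abs_of_pos hNpos, le_div_iff₀ hNpos, mul_comm η]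
    rw [hset]
    refine (measure_pi_le_abs_sum_sub_le (hY k) (hC k) N (by positivity)).trans_eq ?_
    congr 1
    field_simp
  refine ⟨N, ⋂ k, good k, .iInter hgood, ?_, fun xs hxs k => Set.mem_iInter.mp hxs k⟩
  refine ofReal_one_sub_le_of_measure_compl_le (.iInter hgood) hδ.le ?_
  calc Measure.pi (fun _ : Fin N => p) (⋂ k, good k)ᶜ
      ≤ ∑ k, Measure.pi (fun _ : Fin N => p) (good k)ᶜ := by
        rw [Set.compl_iInter]; exact measure_iUnion_fintype_le _ _
    _ ≤ ∑ _k : κ, ENNReal.ofReal (C ^ 2 / (N * η ^ 2)) := Finset.sum_le_sum fun k _ => hbad k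
    _ = ENNReal.ofReal (Fintype.card κ * (C ^ 2 / (N * η ^ 2))) := by
        rw [Finset.sum_const, nsmul_eq_mul, ENNReal.ofReal_mul (by positivity),
          ENNReal.ofReal_natCast, Finset.card_univ]
    _ ≤ ENNReal.ofReal δ := by
        refine ENNReal.ofReal_le_ofReal ?_
        rw [div_lt_iff₀ (by positivity)] at hN
        rw [← mul_div_assoc, div_le_iff₀ (by positivity)]
        nlinarith

end WeakLaw

section UniformOnCompact

variable {X : Type*} [PseudoMetricSpace X]

lemma IsCompact.exists_finset_abs_lt_of_lipschitzWith {K : Set X} (hK : IsCompact K)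
    (L : ℝ≥0) {η : ℝ} (hη : 0 < η) :
    ∃ T : Finset X, ∀ u : X → ℝ, LipschitzWith L u → (∀ y ∈ T, |u y| < η / 2) →
      ∀ x ∈ K, |u x| < η := by
  obtain ⟨T, -, hTfin, hcover⟩ := hK.finite_cover_balls (e := η / (2 * (L + 1))) (by positivity)
  refine ⟨hTfin.toFinset, fun u hu hT x hx => ?_⟩
  obtain ⟨y, hy, hxy⟩ := Set.mem_iUnion₂.mp (hcover hx)
  have hclose : |u x - u y| ≤ η / 2 := calc
    |u x - u y| ≤ L * dist x y := by simpa [Real.dist_eq] using hu.dist_le_mul x y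
    _ ≤ (L + 1) * (η / (2 * (L + 1))) := by
      gcongr
      · linarith
      · exact (Metric.mem_ball.mp hxy).le
    _ = η / 2 := by field_simp
  linarith [abs_sub_abs_le_abs_sub (u x) (u y), hT y (hTfin.mem_toFinset.mpr hy)]

variable {Ω : Type*}

lemma lipschitzWith_sum_div {F : Ω → X → ℝ} {L : ℝ≥0} (hF : ∀ ω, LipschitzWith L (F ω))
    {N : ℕ} (xs : Fin N → Ω) :
    LipschitzWith L fun x => (∑ j, F (xs j) x) / N := by
  refine LipschitzWith.of_dist_le_mul fun x y => ?_
  rcases N.eq_zero_or_pos with rfl | hN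
  · simp only [Finset.univ_eq_empty, Finset.sum_empty, dist_self]
    positivity
  rw [Real.dist_eq, ← sub_div, ← Finset.sum_sub_distrib, abs_div, Nat.abs_cast,
    div_le_iff₀ (by positivity)]
  calc |∑ j, (F (xs j) x - F (xs j) y)| ≤ ∑ j, |F (xs j) x - F (xs j) y| :=
        Finset.abs_sum_le_sum_abs _ _
    _ ≤ ∑ _j : Fin N, L * dist x y := Finset.sum_le_sum fun j _ => by
        simpa [Real.dist_eq] using (hF (xs j)).dist_le_mul x y
    _ = L * dist x y * N := by simp [mul_comm]

variable [MeasurableSpace Ω] {p : Measure Ω} [IsProbabilityMeasure p]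

lemma lipschitzWith_integral {F : Ω → X → ℝ} {L : ℝ≥0} (hF : ∀ ω, LipschitzWith L (F ω))
    (hint : ∀ x, Integrable (fun ω => F ω x) p) :
    LipschitzWith L fun x => ∫ ω, F ω x ∂p := by
  refine LipschitzWith.of_dist_le_mul fun x y => ?_
  rw [dist_eq_norm, ← integral_sub (hint x) (hint y)]
  simpa using norm_integral_le_of_norm_le_const
    (ae_of_all p fun ω => (dist_eq_norm _ _).symm.trans_le ((hF ω).dist_le_mul x y))

theorem IsCompact.exists_measure_pi_ge_forall_abs_average_sub_integral_lt {K : Set X}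
    (hK : IsCompact K) {ι : Type*} [Fintype ι] {F : ι → Ω → X → ℝ}
    (hFm : ∀ i x, Measurable fun ω => F i ω x) {C : ℝ} (hC : ∀ i ω x, |F i ω x| ≤ C)
    {L : ℝ≥0} (hL : ∀ i ω, LipschitzWith L (F i ω)) {η δ : ℝ} (hη : 0 < η) (hδ : 0 < δ) :
    ∃ N : ℕ, ∃ E : Set (Fin N → Ω), MeasurableSet E ∧
      ENNReal.ofReal (1 - δ) ≤ Measure.pi (fun _ : Fin N => p) E ∧
      ∀ xs ∈ E, ∀ i, ∀ x ∈ K, |(∑ j, F i (xs j) x) / N - ∫ ω, F i ω x ∂p| < η := by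
  obtain ⟨T, hT⟩ := hK.exists_finset_abs_lt_of_lipschitzWith (L + L) hη
  obtain ⟨N, E, hE, hEp, hEgood⟩ := _root_.exists_measure_pi_ge_forall_abs_average_sub_integral_lt
    (p := p) (κ := ι × T) (Y := fun k ω => F k.1 ω k.2) (fun k => hFm _ _) (fun k ω => hC _ _ _)
    (half_pos hη) hδ
  refine ⟨N, E, hE, hEp, fun xs hxs i => hT _ ?_ fun y hy => hEgood xs hxs (i, ⟨y, hy⟩)⟩
  have hint : ∀ x, Integrable (fun ω => F i ω x) p := fun x =>
    .of_bound (hFm i x).aestronglyMeasurable C (ae_of_all p fun ω => hC i ω x)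
  exact (lipschitzWith_sum_div (hL i) xs).sub (lipschitzWith_integral (hL i) hint)

end UniformOnCompact

lemma abs_mul_le_of_abs_le_one {a b C : ℝ} (ha : |a| ≤ C) (hb : |b| ≤ 1) : |a * b| ≤ C := by
  rw [abs_mul]
  nlinarith [abs_nonneg a, abs_nonneg b]

section RandomFeatures

open Metric Filter Topology

variable {E : Type*} [NormedAddCommGroup E]

lemma exists_forall_abs_integral_sub_setIntegral_closedBall_lt [MeasurableSpace E]
    [OpensMeasurableSpace E] (μ : Measure E) [IsFiniteMeasure μ] (C : ℝ) {η : ℝ} (hη : 0 < η) :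
    ∃ R : ℕ, ∀ G : E → ℝ, Integrable G μ → (∀ α, |G α| ≤ C) →
      |∫ α, G α ∂μ - ∫ α in closedBall 0 R, G α ∂μ| < η := by
  have htail : Tendsto (fun R : ℕ => μ (closedBall (0 : E) R)ᶜ) atTop (𝓝 0) := by
    have hempty : ⋂ R : ℕ, (closedBall (0 : E) R)ᶜ = ∅ := by
      simp only [← Set.compl_iUnion, Set.compl_empty_iff]
      exact
        Set.iUnion_eq_univ_iff.mpr fun α => (exists_nat_ge ‖α‖).imp fun _ h => by simpa using h
    have := tendsto_measure_iInter_atTop (μ := μ) (s := fun R : ℕ => (closedBall (0 : E) R)ᶜ)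
      (fun R => measurableSet_closedBall.compl.nullMeasurableSet)
      (fun m n hmn => Set.compl_subset_compl.mpr
        (closedBall_subset_closedBall (by exact_mod_cast hmn)))
      ⟨0, measure_ne_top μ _⟩
    rwa [hempty, measure_empty] at this
  have hτ : 0 < η / (|C| + 1) := by positivity
  obtain ⟨R, hR⟩ := (htail.eventually_lt_const (ENNReal.ofReal_pos.mpr hτ)).exists
  have hRreal : μ.real (closedBall 0 R)ᶜ < η / (|C| + 1) := ENNReal.toReal_lt_of_lt_ofReal hR
  refine ⟨R, fun G hG hGC => ?_⟩
  rw [← integral_add_compl measurableSet_closedBall hG, add_sub_cancel_left]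
  calc |∫ α in (closedBall 0 R)ᶜ, G α ∂μ| ≤ C * μ.real (closedBall 0 R)ᶜ :=
        norm_setIntegral_le_of_norm_le_const (f := G) (measure_lt_top _ _) fun α _ => hGC α
    _ ≤ (|C| + 1) * μ.real (closedBall 0 R)ᶜ := by gcongr; linarith [le_abs_self C]
    _ < (|C| + 1) * (η / (|C| + 1)) := by gcongr
    _ = η := by field_simp

variable [InnerProductSpace ℝ E]

lemma lipschitzWith_mul_comp_inner {ϕ : ℝ → ℝ} {L : ℝ≥0} (hϕ : LipschitzWith L ϕ)
    {B : E → ℝ} {C R : ℝ≥0} (hC : ∀ α, |B α| ≤ C) (hR : ∀ α, R < ‖α‖ → B α = 0) (α : E) :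
    LipschitzWith (C * L * R) fun x => B α * ϕ ⟪α, x⟫ := by
  refine LipschitzWith.of_dist_le_mul fun x y => ?_
  rcases le_or_gt ‖α‖ R with hα | hα
  · have hϕxy : |ϕ ⟪α, x⟫ - ϕ ⟪α, y⟫| ≤ L * (‖α‖ * dist x y) := calc
      |ϕ ⟪α, x⟫ - ϕ ⟪α, y⟫| ≤ L * |⟪α, x⟫ - ⟪α, y⟫| := by
        simpa [Real.dist_eq] using hϕ.dist_le_mul _ _
      _ ≤ L * (‖α‖ * dist x y) := by
        rw [← inner_sub_right, dist_eq_norm]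
        gcongr
        exact abs_real_inner_le_norm _ _
    rw [Real.dist_eq, ← mul_sub, abs_mul]
    calc |B α| * |ϕ ⟪α, x⟫ - ϕ ⟪α, y⟫| ≤ C * (L * (‖α‖ * dist x y)) := by
          gcongr
          exact hC α
      _ ≤ C * (L * (R * dist x y)) := by gcongr
      _ = C * L * R * dist x y := by ring
  · simp only [hR α hα, zero_mul, dist_self]
    positivity

variable [MeasurableSpace E] [OpensMeasurableSpace E] {p : Measure E}

lemma integrable_mul_comp_inner [IsFiniteMeasure p] {B : E → ℝ} (hBm : Measurable B) {C : ℝ}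
    (hBC : ∀ α, |B α| ≤ C) {ϕ : ℝ → ℝ} (hϕm : Measurable ϕ) (hϕ : ∀ t, |ϕ t| ≤ 1) (x : E) :
    Integrable (fun α => B α * ϕ ⟪α, x⟫) p :=
  .of_bound (hBm.mul (hϕm.comp (by fun_prop))).aestronglyMeasurable C
    (ae_of_all p fun α => abs_mul_le_of_abs_le_one (hBC α) (hϕ _))

theorem IsCompact.exists_measure_pi_ge_forall_abs_average_mul_comp_inner_sub_integral_lt
    [IsProbabilityMeasure p] {K : Set E} (hK : IsCompact K) {ϕ : ℝ → ℝ} {L : ℝ≥0}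
    (hϕL : LipschitzWith L ϕ) (hϕ : ∀ t, |ϕ t| ≤ 1)
    {ι : Type*} [Fintype ι] {B : ι → E → ℝ} (hBm : ∀ i, Measurable (B i)) {C R : ι → ℝ≥0}
    (hBC : ∀ i α, |B i α| ≤ C i) (hBR : ∀ i α, R i < ‖α‖ → B i α = 0)
    {η δ : ℝ} (hη : 0 < η) (hδ : 0 < δ) :
    ∃ N : ℕ, ∃ S : Set (Fin N → E), MeasurableSet S ∧
      ENNReal.ofReal (1 - δ) ≤ Measure.pi (fun _ : Fin N => p) S ∧
      ∀ αs ∈ S, ∀ i, ∀ x ∈ K,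
        |(∑ j, B i (αs j) * ϕ ⟪αs j, x⟫) / N - ∫ α, B i α * ϕ ⟪α, x⟫ ∂p| < η := by
  have hC : ∀ i α, |B i α| ≤ ((∑ k, C k : ℝ≥0) : ℝ) := fun i α => (hBC i α).trans
    (NNReal.coe_le_coe.mpr (Finset.single_le_sum (fun _ _ => zero_le) (Finset.mem_univ i)))
  have hR : ∀ i α, ((∑ k, R k : ℝ≥0) : ℝ) < ‖α‖ → B i α = 0 := fun i α hα => hBR i α
    ((NNReal.coe_le_coe.mpr (Finset.single_le_sum (fun _ _ => zero_le)
      (Finset.mem_univ i))).trans_lt hα)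
  exact hK.exists_measure_pi_ge_forall_abs_average_sub_integral_lt
    (fun i x => (hBm i).mul (hϕL.continuous.measurable.comp (by fun_prop)))
    (fun i α x => abs_mul_le_of_abs_le_one (hC i α) (hϕ _))
    (fun i => lipschitzWith_mul_comp_inner hϕL (hC i) (hR i)) hη hδ

end RandomFeatures

lemma IsCompact.exists_partitionOfUnity_dist_lt {Y : Type*} [MetricSpace Y] {U : Set Y}
    (hU : IsCompact U) {r : ℝ} (hr : 0 < r) :
    ∃ (T : Finset Y) (ρ : PartitionOfUnity T U Set.univ),
      ∀ t f, ρ t f ≠ 0 → dist (f : Y) t < r := by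
  obtain ⟨T, -, hTfin, hcover⟩ := hU.finite_cover_balls hr
  obtain ⟨ρ, hρ⟩ := PartitionOfUnity.exists_isSubordinate isClosed_univ
    (fun t : hTfin.toFinset => {f : U | dist (f : Y) t < r})
    (fun t => isOpen_lt (by fun_prop) continuous_const)
    (fun f _ => by simpa using hcover f.2)
  exact ⟨hTfin.toFinset, ρ, fun t f hf => hρ t (subset_tsupport _ hf)⟩

lemma PartitionOfUnity.abs_sub_sum_mul_lt {ι X : Type*} [Fintype ι] [TopologicalSpace X]
    {s : Set X} (ρ : PartitionOfUnity ι X s) {x : X} (hx : x ∈ s) {a ε : ℝ} {b : ι → ℝ}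
    (h : ∀ i, ρ i x ≠ 0 → |a - b i| < ε) : |a - ∑ i, ρ i x * b i| < ε := by
  have := ρ.finsum_smul_mem_convex (g := fun i _ => b i) hx
    (fun i hi => by simpa [Real.dist_eq, abs_sub_comm] using h i hi) (convex_ball a ε)
  rw [finsum_eq_sum_of_fintype] at this
  simpa [Real.dist_eq, abs_sub_comm] using this

namespace IsRich

variable {q : ℕ} {ϕ : ℝ → ℝ} {V : Set (EuclideanSpace ℝ (Fin q))}
  {p : Measure (EuclideanSpace ℝ (Fin q))} [IsFiniteMeasure p]

lemma exists_integral_approx (hrich : IsRich ϕ V p) (hϕm : Measurable ϕ)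
    (hϕ : ∀ t, |ϕ t| ≤ 1) (f : C(V, ℝ)) {η : ℝ} (hη : 0 < η) :
    ∃ B : EuclideanSpace ℝ (Fin q) → ℝ, Measurable B ∧ (∃ C, ∀ α, |B α| ≤ C) ∧
      ∀ x : V, |f x - ∫ α, B α * ϕ ⟪α, (x : EuclideanSpace ℝ (Fin q))⟫ ∂p| < η := by
  classical
  obtain ⟨g, -, -, hdense, hrep⟩ := hrich
  set F : EuclideanSpace ℝ (Fin q) → ℝ := fun x => if hx : x ∈ V then f ⟨x, hx⟩ else 0
  have hF : ContinuousOn F V := by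
    rw [continuousOn_iff_continuous_domRestrict]
    convert f.continuous using 1
    ext x
    simp [F, x.2]
  obtain ⟨N, w, a, b, happrox⟩ := hdense F hF η hη
  choose β hβm hβC hβrep using fun i => hrep (a i) (b i)
  choose Cβ hCβ using hβC
  refine ⟨fun α => ∑ i, w i * β i α, by fun_prop, ⟨∑ i, |w i| * Cβ i, fun α => ?_⟩, fun x => ?_⟩
  · calc |∑ i, w i * β i α| ≤ ∑ i, |w i * β i α| := Finset.abs_sum_le_sum_abs _ _
      _ ≤ ∑ i, |w i| * Cβ i := Finset.sum_le_sum fun i _ => by rw [abs_mul]; gcongr; exact hCβ i α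
  · have hrepr : ∫ α, (∑ i, w i * β i α) * ϕ ⟪α, (x : EuclideanSpace ℝ (Fin q))⟫ ∂p =
        ∑ i, w i * g (a i • (x : EuclideanSpace ℝ (Fin q)) + b i) := by
      simp_rw [Finset.sum_mul, mul_assoc]
      rw [integral_finsetSum _ fun i _ =>
        (integrable_mul_comp_inner (hβm i) (hCβ i) hϕm hϕ x).const_mul (w i)]
      simp_rw [integral_const_mul, hβrep _ x x.2]
    simpa [hrepr, F, x.2] using happrox x x.2

lemma exists_integral_approx_of_bounded_support (hrich : IsRich ϕ V p) (hϕm : Measurable ϕ)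
    (hϕ : ∀ t, |ϕ t| ≤ 1) (f : C(V, ℝ)) {η : ℝ} (hη : 0 < η) :
    ∃ B : EuclideanSpace ℝ (Fin q) → ℝ, Measurable B ∧ ∃ C R : ℝ≥0, (∀ α, |B α| ≤ C) ∧
      (∀ α, R < ‖α‖ → B α = 0) ∧
      ∀ x : V, |f x - ∫ α, B α * ϕ ⟪α, (x : EuclideanSpace ℝ (Fin q))⟫ ∂p| < η := by
  obtain ⟨B, hBm, ⟨C, hC⟩, hBf⟩ := hrich.exists_integral_approx hϕm hϕ f (half_pos hη)
  obtain ⟨R, hR⟩ := exists_forall_abs_integral_sub_setIntegral_closedBall_lt p C (half_pos hη)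
  have hball : MeasurableSet (Metric.closedBall (0 : EuclideanSpace ℝ (Fin q)) R) :=
    measurableSet_closedBall
  refine ⟨(Metric.closedBall 0 R).indicator B, hBm.indicator hball, C.toNNReal, R,
    fun α => ?_, fun α hα => Set.indicator_of_notMem (by simpa using hα) _, fun x => ?_⟩
  · by_cases hα : α ∈ Metric.closedBall 0 (R : ℝ)
    · simpa [hα] using (hC α).trans (Real.le_coe_toNNReal C)
    · simp [hα]
  · have htrunc := hR _ (integrable_mul_comp_inner hBm hC hϕm hϕ x)
      fun α => abs_mul_le_of_abs_le_one (hC α) (hϕ _)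
    rw [← integral_indicator hball] at htrunc
    simp only [Set.indicator_mul_left] at htrunc
    exact (abs_sub_le _ (∫ α, B α * ϕ ⟪α, (x : EuclideanSpace ℝ (Fin q))⟫ ∂p) _).trans_lt
      (by linarith [hBf x])

end IsRich

theorem random_feature_universal_approximation_of_functions
    (d : ℕ) (K : Set (EuclideanSpace ℝ (Fin d))) (hK : IsCompact K)
    (U : Set C(K, ℝ)) (hU : IsCompact U)
    (ϕ : ℝ → ℝ) (hϕLip : ∃ L : NNReal, LipschitzWith L ϕ)
    (hϕbdd : ∀ t : ℝ, |ϕ t| ≤ 1)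
    (p : Measure (EuclideanSpace ℝ (Fin d))) [IsProbabilityMeasure p]
    (hrich : IsRich ϕ K p)
    (ε : ℝ) (hε : 0 < ε) (δ : ℝ) (hδ : δ ∈ Set.Ioo (0 : ℝ) 1) :
    ∃ N : ℕ, ∃ E : Set (Fin N → EuclideanSpace ℝ (Fin d)),
      MeasurableSet E ∧
      ENNReal.ofReal (1 - δ) ≤ (Measure.pi fun _ : Fin N => p) E ∧
      ∀ αs ∈ E, ∃ c : Fin N → U → ℝ,
        (∀ j, Continuous (c j)) ∧
        ∀ f : U, ∀ x : K,
          |(f : C(K, ℝ)) x - ∑ j, c j f * ϕ ⟪αs j, (x : EuclideanSpace ℝ (Fin d))⟫| < ε := by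
  obtain ⟨L, hL⟩ := hϕLip
  have : CompactSpace K := isCompact_iff_compactSpace.mp hK
  have hε3 : 0 < ε / 3 := by positivity
  obtain ⟨T, ρ, hρ⟩ := hU.exists_partitionOfUnity_dist_lt hε3
  choose B hBm C R hBC hBR hBt using fun t : T =>
    hrich.exists_integral_approx_of_bounded_support hL.continuous.measurable hϕbdd t hε3
  obtain ⟨N, E, hE, hEp, hEB⟩ :=
    hK.exists_measure_pi_ge_forall_abs_average_mul_comp_inner_sub_integral_lt (p := p) hL hϕbdd
      hBm hBC hBR hε3 hδ.1
  refine ⟨N, E, hE, hEp, fun αs hαs => ⟨fun j f => ∑ t, ρ t f * (B t (αs j) / N),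
    fun j => by fun_prop, fun f x => ?_⟩⟩
  set I : T → ℝ := fun t => ∫ α, B t α * ϕ ⟪α, (x : EuclideanSpace ℝ (Fin d))⟫ ∂p
  set G : T → ℝ := fun t => (∑ j, B t (αs j) * ϕ ⟪αs j, (x : EuclideanSpace ℝ (Fin d))⟫) / N
  have hclose : ∀ t, ρ t f ≠ 0 → |(f : C(K, ℝ)) x - G t| < ε := by
    intro t ht
    have hft : |(f : C(K, ℝ)) x - (t : C(K, ℝ)) x| < ε / 3 :=
      (ContinuousMap.dist_apply_le_dist x).trans_lt (hρ t f ht)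
    linarith [hBt t x, hEB αs hαs t x x.2, abs_sub_comm (G t) (I t),
      abs_sub_le ((f : C(K, ℝ)) x) ((t : C(K, ℝ)) x) (I t),
      abs_sub_le ((f : C(K, ℝ)) x) (I t) (G t)]
  have hsum : ∑ j, (∑ t, ρ t f * (B t (αs j) / N)) * ϕ ⟪αs j, (x : EuclideanSpace ℝ (Fin d))⟫ =
      ∑ t, ρ t f * G t := by
    simp only [G, Finset.sum_mul, Finset.mul_sum, Finset.sum_div]
    rw [Finset.sum_comm]
    exact Finset.sum_congr rfl fun t _ => Finset.sum_congr rfl fun j _ => by ring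
  rw [hsum]
  exact ρ.abs_sub_sum_mul_lt (Set.mem_univ f) hclose
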